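/- Let μ₁ and μ₂ be Borel probability measures on ℝ such that μ₁((−∞,t]) ≤ μ₂((−∞,t]) for every t ∈ ℝ (i.e., μ₁ is stochastically larger than μ₂, F₁ ≤ F₂). Then ∫_ℝ (1/2)·(μ₁((t,∞)) + μ₁([t,∞))) dμ₂(t) ≥ 1/2. Consequently, if T₁ and T₂ are independent real-valued random variables whose distribution functions satisfy F₁ ≤ F₂ pointwise, then the Mann–Whitney effect satisfies p = P(T₁ > T₂) + (1/2)·P(T₁ = T₂) ≥ 1/2; that is, a stochastic order F₁ ≤ F₂ implies p ≥ 1/2. -/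

import Mathlib

/- The Mann–Whitney effect of a measure against itself is 1/2: by Fubini,
`∫ μ[t, ∞) dμ(t) = (μ ⊗ μ){x ≤ y} = ∫ μ(-∞, t] dμ(t)`, so
`∫ (μ(t, ∞) + μ[t, ∞)) dμ(t) = ∫ (μ(t, ∞) + μ(-∞, t]) dμ(t) = 1`.
If `F₁ ≤ F₂`, then also `F₁(t-) ≤ F₂(t-)`, so both survival functions of `μ₁` dominate those of
`μ₂` and the integral against `μ₂` can only grow when `μ₂` is replaced by `μ₁` in the integrand.
For independent `T₁, T₂` the law of `(T₁, T₂)` is `μ₁ ⊗ μ₂`, and by Fubini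
`P(T₁ > T₂) + P(T₁ ≥ T₂) = ∫ (μ₁(t, ∞) + μ₁[t, ∞)) dμ₂(t)`. -/

open MeasureTheory ProbabilityTheory Set

lemma antitone_measure_Ioi {α : Type*} [MeasurableSpace α] [Preorder α] (μ : Measure α) :
    Antitone fun t => μ (Ioi t) :=
  fun _ _ hst => measure_mono (antitone_Ioi hst)

lemma antitone_measure_Ici {α : Type*} [MeasurableSpace α] [Preorder α] (μ : Measure α) :
    Antitone fun t => μ (Ici t) :=
  fun _ _ hst => measure_mono (antitone_Ici hst)

section LinearOrder

variable {α : Type*} [TopologicalSpace α] [MeasurableSpace α] [BorelSpace α]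
  [LinearOrder α] [OrderClosedTopology α] [SecondCountableTopology α]

lemma lintegral_measure_Ici_eq_lintegral_measure_Iic (μ ν : Measure α) [SFinite μ] [SFinite ν] :
    ∫⁻ x, ν (Ici x) ∂μ = ∫⁻ y, μ (Iic y) ∂ν := by
  have hs : MeasurableSet {p : α × α | p.1 ≤ p.2} := measurableSet_le'
  exact (Measure.prod_apply hs).symm.trans (Measure.prod_apply_symm hs)

lemma lintegral_measure_Ioi_add_measure_Ici_self (μ : Measure α) [SFinite μ] :
    ∫⁻ t, μ (Ioi t) + μ (Ici t) ∂μ = μ univ * μ univ := by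
  have hmeas : Measurable fun t => μ (Ioi t) := (antitone_measure_Ioi μ).measurable
  have hcompl (t : α) : μ (Ioi t) + μ (Iic t) = μ univ := by
    rw [add_comm, ← compl_Iic, measure_add_measure_compl measurableSet_Iic]
  rw [lintegral_add_left hmeas, lintegral_measure_Ici_eq_lintegral_measure_Iic,
    ← lintegral_add_left hmeas]
  simp only [hcompl, lintegral_const]

end LinearOrder

section StochasticOrder

variable {μ ν : Measure ℝ}

lemma measure_Iio_le_of_forall_measure_Iic_le (h : ∀ t, μ (Iic t) ≤ ν (Iic t)) (t : ℝ) :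
    μ (Iio t) ≤ ν (Iio t) := by
  obtain ⟨u, hu_mono, hu_lt, hu_lim⟩ := exists_seq_strictMono_tendsto t
  have hmono : Monotone fun n => Iic (u n) := monotone_Iic.comp hu_mono.monotone
  rw [← iUnion_Iic_eq_Iio_of_lt_of_tendsto hu_lt hu_lim, hmono.measure_iUnion,
    hmono.measure_iUnion]
  exact iSup_mono fun n => h (u n)

variable [IsProbabilityMeasure μ] [IsProbabilityMeasure ν]

lemma measure_Ioi_le_of_forall_measure_Iic_le (h : ∀ t, μ (Iic t) ≤ ν (Iic t)) (t : ℝ) :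
    ν (Ioi t) ≤ μ (Ioi t) := by
  rw [← compl_Iic, prob_compl_eq_one_sub measurableSet_Iic,
    prob_compl_eq_one_sub measurableSet_Iic]
  exact tsub_le_tsub_left (h t) 1

lemma measure_Ici_le_of_forall_measure_Iic_le (h : ∀ t, μ (Iic t) ≤ ν (Iic t)) (t : ℝ) :
    ν (Ici t) ≤ μ (Ici t) := by
  rw [← compl_Iio, prob_compl_eq_one_sub measurableSet_Iio,
    prob_compl_eq_one_sub measurableSet_Iio]
  exact tsub_le_tsub_left (measure_Iio_le_of_forall_measure_Iic_le h t) 1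

end StochasticOrder

lemma one_le_lintegral_measure_Ioi_add_measure_Ici {μ ν : Measure ℝ} [IsProbabilityMeasure μ]
    [IsProbabilityMeasure ν] (h : ∀ t, μ (Iic t) ≤ ν (Iic t)) :
    1 ≤ ∫⁻ t, μ (Ioi t) + μ (Ici t) ∂ν :=
  calc 1 = ∫⁻ t, ν (Ioi t) + ν (Ici t) ∂ν := by
        rw [lintegral_measure_Ioi_add_measure_Ici_self, measure_univ, one_mul]
    _ ≤ ∫⁻ t, μ (Ioi t) + μ (Ici t) ∂ν := lintegral_mono fun t =>
        add_le_add (measure_Ioi_le_of_forall_measure_Iic_le h t)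
          (measure_Ici_le_of_forall_measure_Iic_le h t)

lemma one_le_toReal_lintegral_measure_Ioi_add_measure_Ici {μ ν : Measure ℝ}
    [IsProbabilityMeasure μ] [IsProbabilityMeasure ν] (h : ∀ t, μ (Iic t) ≤ ν (Iic t)) :
    1 ≤ (∫⁻ t, μ (Ioi t) + μ (Ici t) ∂ν).toReal := by
  have hbound : ∫⁻ t, μ (Ioi t) + μ (Ici t) ∂ν ≤ ∫⁻ _, 1 + 1 ∂ν :=
    lintegral_mono fun t => add_le_add prob_le_one prob_le_one
  rw [lintegral_const, measure_univ, mul_one] at hbound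
  simpa using ENNReal.toReal_mono (ne_top_of_le_ne_top (by simp) hbound)
    (one_le_lintegral_measure_Ioi_add_measure_Ici h)

lemma integral_half_mul_toReal_measure_Ioi_add_toReal_measure_Ici (μ ν : Measure ℝ)
    [IsFiniteMeasure μ] :
    ∫ t, (1 / 2) * ((μ (Ioi t)).toReal + (μ (Ici t)).toReal) ∂ν =
      (1 / 2) * (∫⁻ t, μ (Ioi t) + μ (Ici t) ∂ν).toReal := by
  have hmeas : Measurable fun t => μ (Ioi t) + μ (Ici t) :=
    ((antitone_measure_Ioi μ).add (antitone_measure_Ici μ)).measurable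
  simp_rw [integral_const_mul, ← ENNReal.toReal_add (measure_ne_top _ _) (measure_ne_top _ _)]
  rw [integral_toReal hmeas.aemeasurable
    (ae_of_all _ fun t => ENNReal.add_lt_top.2 ⟨measure_lt_top _ _, measure_lt_top _ _⟩)]

namespace ProbabilityTheory

lemma IndepFun.measure_preimage_eq_lintegral {Ω α β : Type*} [MeasurableSpace Ω]
    [MeasurableSpace α] [MeasurableSpace β] {P : Measure Ω} [IsFiniteMeasure P] {X : Ω → α}
    {Y : Ω → β} (hXY : IndepFun X Y P) (hX : Measurable X) (hY : Measurable Y)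
    {s : Set (α × β)} (hs : MeasurableSet s) :
    P {ω | (X ω, Y ω) ∈ s} = ∫⁻ y, P.map X ((fun x => (x, y)) ⁻¹' s) ∂(P.map Y) := by
  rw [← Measure.prod_apply_symm hs,
    ← (indepFun_iff_map_prod_eq_prod_map_map hX.aemeasurable hY.aemeasurable).1 hXY,
    Measure.map_apply (hX.prodMk hY) hs]
  rfl

lemma IndepFun.mannWhitney_eq_half_toReal_lintegral {Ω : Type*} [MeasurableSpace Ω]
    {P : Measure Ω} [IsFiniteMeasure P] {T₁ T₂ : Ω → ℝ} (hT : IndepFun T₁ T₂ P)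
    (hT₁ : Measurable T₁) (hT₂ : Measurable T₂) :
    (P {ω | T₁ ω > T₂ ω}).toReal + (1 / 2) * (P {ω | T₁ ω = T₂ ω}).toReal =
      (1 / 2) * (∫⁻ t, P.map T₁ (Ioi t) + P.map T₁ (Ici t) ∂(P.map T₂)).toReal := by
  have hgt : P {ω | T₁ ω > T₂ ω} = ∫⁻ t, P.map T₁ (Ioi t) ∂(P.map T₂) :=
    hT.measure_preimage_eq_lintegral hT₁ hT₂ (measurableSet_lt measurable_snd measurable_fst)
  have hge : P {ω | T₂ ω ≤ T₁ ω} = ∫⁻ t, P.map T₁ (Ici t) ∂(P.map T₂) :=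
    hT.measure_preimage_eq_lintegral hT₁ hT₂ (measurableSet_le measurable_snd measurable_fst)
  have hsplit : P {ω | T₂ ω ≤ T₁ ω} = P {ω | T₁ ω > T₂ ω} + P {ω | T₁ ω = T₂ ω} := by
    rw [← measure_union _ (measurableSet_eq_fun hT₁ hT₂)]
    · congr 1
      ext ω
      exact (le_iff_lt_or_eq (a := T₂ ω)).trans (or_congr_right eq_comm)
    · exact disjoint_left.2 fun ω hlt heq => ne_of_gt hlt heq
  rw [lintegral_add_left (antitone_measure_Ioi _).measurable, ← hgt, ← hge, hsplit,
    ENNReal.toReal_add (measure_ne_top _ _) (by finiteness),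
    ENNReal.toReal_add (measure_ne_top _ _) (measure_ne_top _ _)]
  ring

end ProbabilityTheory

theorem stochastic_order_implies_mann_whitney_effect_ge_half.{u} :
    (∀ (μ₁ μ₂ : Measure ℝ), IsProbabilityMeasure μ₁ → IsProbabilityMeasure μ₂ →
        (∀ t : ℝ, μ₁ (Set.Iic t) ≤ μ₂ (Set.Iic t)) →
        ∫ t, (1 / 2) * ((μ₁ (Set.Ioi t)).toReal + (μ₁ (Set.Ici t)).toReal) ∂μ₂ ≥ 1 / 2)
    ∧ (∀ (Ω : Type u) [MeasurableSpace Ω] (P : Measure Ω), IsProbabilityMeasure P →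
        ∀ (T₁ T₂ : Ω → ℝ), Measurable T₁ → Measurable T₂ → IndepFun T₁ T₂ P →
          (∀ t : ℝ, (P.map T₁) (Set.Iic t) ≤ (P.map T₂) (Set.Iic t)) →
          (P {ω | T₁ ω > T₂ ω}).toReal + (1 / 2) * (P {ω | T₁ ω = T₂ ω}).toReal ≥ 1 / 2) := by
  refine ⟨fun μ₁ μ₂ _ _ hF => ?_, fun Ω _ P _ T₁ T₂ hT₁ hT₂ hT hF => ?_⟩
  · rw [integral_half_mul_toReal_measure_Ioi_add_toReal_measure_Ici]
    linarith [one_le_toReal_lintegral_measure_Ioi_add_measure_Ici hF]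
  · have := Measure.isProbabilityMeasure_map (μ := P) hT₁.aemeasurable
    have := Measure.isProbabilityMeasure_map (μ := P) hT₂.aemeasurable
    rw [hT.mannWhitney_eq_half_toReal_lintegral hT₁ hT₂]
    linarith [one_le_toReal_lintegral_measure_Ioi_add_measure_Ici hF]
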